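/- Let (P, L) be a configuration of points and lines with finite maximum incidence I > 2 (each point lies on at most I lines of L), where P is countable and each line contains a discrete linearly ordered set of points of P. If C ≥ 2I + 10⌈√I⌉, then there exists a coloring of P with C colors such that on every line ℓ ∈ L, the sequence of colors of consecutive points of P on ℓ is nonrepetitive. -/

import Mathlib

/-!
Write `A(S)` for the number of colorings of a finite point set `S` that are nonrepetitive on `S`,
and let `β = ⌈√I⌉ + 1`. By induction on `S`, `β A(S) ≤ A(S ∪ {v})`. Indeed, of the `C A(S)`
extensions to `v` of the good colorings of `S`, each bad one has a repetition of some length `2h`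
through `v` on one of the at most `I` lines through `v`; it is determined by its values off the
half containing `v`, and by induction the `h - 1` points of `S` in that half cost a factor
`β ^ (h - 1)`. So at most `2 I (β / (β - 1)) ^ 2 A(S)` extensions are bad, and
`β + 2 I (β / (β - 1)) ^ 2 ≤ C`. Every finite set thus has a nonrepetitive coloring, and compactness
of `P → Fin C` yields a global one.
-/

open Finset Function

theorem sum_range_le_of_pow_mul_le {β A : ℝ} (hβ : 1 < β) (hA : 0 ≤ A) {f : ℕ → ℝ}
    (hf : ∀ k, β ^ k * f k ≤ (k + 1) * A) (N : ℕ) :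
    ∑ k ∈ range N, f k ≤ (β / (β - 1)) ^ 2 * A := by
  have hβ0 : 0 < β := by linarith
  have hr : ‖β⁻¹‖ < 1 := by
    rw [norm_inv, Real.norm_of_nonneg hβ0.le]
    exact inv_lt_one_of_one_lt₀ hβ
  have hsum : HasSum (fun k : ℕ => ((k : ℝ) + 1) * β⁻¹ ^ k) ((β / (β - 1)) ^ 2) := by
    have hval : 1 / (1 - β⁻¹) ^ (1 + 1) = (β / (β - 1)) ^ 2 := by
      rw [one_div, ← inv_pow, inv_eq_one_div β, one_sub_div hβ0.ne', inv_div]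
    simpa [hval] using hasSum_choose_mul_geometric_of_norm_lt_one 1 hr
  calc ∑ k ∈ range N, f k ≤ ∑ k ∈ range N, ((k : ℝ) + 1) * β⁻¹ ^ k * A := by
        refine sum_le_sum fun k _ => ?_
        rw [inv_pow, mul_right_comm, ← div_eq_mul_inv, le_div_iff₀ (by positivity), mul_comm]
        exact hf k
    _ = (∑ k ∈ range N, ((k : ℝ) + 1) * β⁻¹ ^ k) * A := (sum_mul ..).symm
    _ ≤ (β / (β - 1)) ^ 2 * A :=
        mul_le_mul_of_nonneg_right (sum_le_hasSum _ (fun _ _ => by positivity) hsum) hA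

theorem add_add_two_mul_div_sq_le {I s : ℝ} (hs : 1 ≤ s) (hI : I ≤ s ^ 2) :
    s + 1 + 2 * I * ((s + 1) / s) ^ 2 ≤ 2 * I + 10 * s := by
  have hs0 : 0 < s := by linarith
  have h : 2 * I * ((s + 1) / s) ^ 2 ≤ 2 * I + 9 * s - 1 := by
    rw [div_pow, mul_div_assoc', div_le_iff₀ (by positivity)]
    nlinarith [mul_le_mul_of_nonneg_left hI (by linarith : 0 ≤ 4 * s)]
  linarith

theorem pow_card_mul_le_of_forall_insert {P : Type*} [DecidableEq P] {A : Finset P → ℕ} {β : ℕ}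
    (hstep : ∀ S v, v ∉ S → (∀ D ⊆ S, β ^ #D * A (S \ D) ≤ A S) → β * A S ≤ A (insert v S))
    (S : Finset P) : ∀ D ⊆ S, β ^ #D * A (S \ D) ≤ A S := by
  induction S using Finset.strongInduction with
  | H S ih =>
  intro D hD
  induction D using Finset.induction_on with
  | empty => simp
  | insert a D ha ihD =>
    have haS : a ∈ S \ D := mem_sdiff.2 ⟨hD (mem_insert_self a D), ha⟩
    have hins : insert a (S \ insert a D) = S \ D := by rw [sdiff_insert, insert_erase haS]
    calc β ^ #(insert a D) * A (S \ insert a D) = β ^ #D * (β * A (S \ insert a D)) := by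
          rw [card_insert_of_notMem ha, pow_succ, mul_assoc]
      _ ≤ β ^ #D * A (S \ D) := by
          refine Nat.mul_le_mul_left _ (hins ▸ hstep _ a (by simp) (ih _ ?_))
          exact sdiff_ssubset hD (insert_nonempty a D)
      _ ≤ A S := ihD ((subset_insert a D).trans hD)

section Blocks

variable {P Λ : Type*} [DecidableEq P] (line : Λ → ℤ → P)

def block (l : Λ) (j : ℤ) (h : ℕ) : Finset P := (range h).image fun t : ℕ => line l (j + t)

variable {line}

@[simp]
theorem mem_block {l : Λ} {j : ℤ} {h : ℕ} {p : P} :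
    p ∈ block line l j h ↔ ∃ t < h, line l (j + t) = p := by
  simp [block]

theorem card_block {l : Λ} (hl : Injective (line l)) (j : ℤ) (h : ℕ) :
    #(block line l j h) = h := by
  rw [block, card_image_of_injective _ fun t t' htt' => by simpa using hl htt', card_range]

theorem line_add_notMem_block {l : Λ} (hl : Injective (line l)) {j j' : ℤ} {h t : ℕ}
    (hdisj : j' + h ≤ j ∨ j + h ≤ j') (ht : t < h) : line l (j' + t) ∉ block line l j h := by
  intro hmem
  obtain ⟨t', ht', heq⟩ := mem_block.1 hmem
  have := hl heq
  omega

end Blocks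

section Repetitions

variable {P Λ α : Type*} (line : Λ → ℤ → P)

def IsRepetition (c : P → α) (l : Λ) (i : ℤ) (h : ℕ) : Prop :=
  ∀ t < h, c (line l (i + t)) = c (line l (i + h + t))

def NonrepetitiveOn (S : Finset P) (c : P → α) : Prop :=
  ∀ (l : Λ) (i : ℤ) (h : ℕ), 0 < h → (∀ t < 2 * h, line l (i + t) ∈ S) →
    ¬ IsRepetition line c l i h

variable {line}

theorem NonrepetitiveOn.mono {S S' : Finset P} {c : P → α} (hc : NonrepetitiveOn line S' c)
    (hS : S ⊆ S') : NonrepetitiveOn line S c :=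
  fun l i h hh hpts => hc l i h hh fun t ht => hS (hpts t ht)

theorem NonrepetitiveOn.congr {S : Finset P} {c c' : P → α} (hc : NonrepetitiveOn line S c)
    (hcc' : ∀ p ∈ S, c p = c' p) : NonrepetitiveOn line S c' := by
  intro l i h hh hpts hrep
  refine hc l i h hh hpts fun t ht => ?_
  have hsnd : line l (i + h + t) ∈ S := by
    simpa [add_assoc] using hpts (h + t) (by omega)
  rw [hcc' _ (hpts t (by omega)), hcc' _ hsnd, hrep t ht]

/-- `P → α` is compact by Tychonoff, and nonrepetitiveness on a finite set is a closed condition. -/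
theorem exists_nonrepetitive_of_forall_finset [Finite α]
    (hS : ∀ S : Finset P, ∃ c : P → α, NonrepetitiveOn line S c) :
    ∃ c : P → α, ∀ l i h, 0 < h → ¬ IsRepetition line c l i h := by
  classical
  let _ : TopologicalSpace α := ⊥
  have : DiscreteTopology α := ⟨rfl⟩
  let good (S : Finset P) : Set (P → α) := {c | NonrepetitiveOn line S c}
  have hclosed (S : Finset P) : IsClosed (good S) := by
    let r : (P → α) → (S → α) := fun c p => c p
    have hgood : good S = r ⁻¹' (r '' good S) := by
      refine (Set.subset_preimage_image r _).antisymm ?_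
      rintro c ⟨c', hc', hcc'⟩
      exact hc'.congr fun p hp => congrFun hcc' ⟨p, hp⟩
    rw [hgood]
    exact (isClosed_discrete _).preimage (continuous_pi fun p => continuous_apply _)
  have hdir : Directed (· ⊇ ·) good := fun S S' =>
    ⟨S ∪ S', fun _ hc => hc.mono subset_union_left, fun _ hc => hc.mono subset_union_right⟩
  obtain ⟨c, hc⟩ := IsCompact.nonempty_iInter_of_directed_nonempty_isCompact_isClosed
    good hdir hS (fun S => (hclosed S).isCompact) hclosed
  refine ⟨c, fun l i h hh => ?_⟩
  exact Set.mem_iInter.1 hc (block line l i (2 * h)) l i h hh fun t ht => mem_block.2 ⟨t, ht, rfl⟩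

end Repetitions

theorem exists_finset_incidences {P Λ : Type*} {line : Λ → ℤ → P} (hinj : ∀ l, Injective (line l))
    {v : P} (hfin : {l : Λ | ∃ z, line l z = v}.Finite) :
    ∃ X : Finset (Λ × ℤ), (∀ x, x ∈ X ↔ line x.1 x.2 = v) ∧
      #X ≤ Nat.card {l : Λ | ∃ z, line l z = v} := by
  set s := {x : Λ × ℤ | line x.1 x.2 = v}
  have hinjOn : Set.InjOn Prod.fst s := fun x hx y hy hxy =>
    Prod.ext hxy (hinj x.1 (hx.trans (hxy ▸ hy.symm)))
  have himage : Prod.fst '' s = {l : Λ | ∃ z, line l z = v} := by ext l; simp [s]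
  have hs : s.Finite := Set.Finite.of_finite_image (himage ▸ hfin) hinjOn
  refine ⟨hs.toFinset, fun x => hs.mem_toFinset, ?_⟩
  rw [← Set.ncard_eq_toFinset_card _ hs, ← hinjOn.ncard_image, himage,
    Nat.card_coe_set_eq]

section Counting

variable {P Λ α : Type*} [DecidableEq P] (line : Λ → ℤ → P) (d : α)

/-- Colorings of `S` that are nonrepetitive on `S`, extended by the constant `d` outside `S`,
so that they form a finite set of functions on all of `P`. -/
def goodColorings (S : Finset P) : Set (P → α) :=
  {c | NonrepetitiveOn line S c ∧ ∀ p ∉ S, c p = d}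

def squareColorings (S : Finset P) (v : P) (l : Λ) (i : ℤ) (h : ℕ) : Set (P → α) :=
  {c | (∀ p ∉ insert v S, c p = d) ∧ NonrepetitiveOn line S c ∧
    (∀ t < 2 * h, line l (i + t) ∈ insert v S) ∧ IsRepetition line c l i h}

variable {line d}

theorem exists_mem_squareColorings_of_not_nonrepetitiveOn_insert
    (hinj : ∀ l, Injective (line l)) {S : Finset P} {v : P} {X : Finset (Λ × ℤ)}
    (hX : ∀ l z, line l z = v → (l, z) ∈ X) {c : P → α} (hcd : ∀ p ∉ insert v S, c p = d)
    (hS : NonrepetitiveOn line S c) (hT : ¬ NonrepetitiveOn line (insert v S) c) :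
    ∃ x ∈ X, ∃ k < #(insert v S), ∃ t₀ < 2 * (k + 1),
      c ∈ squareColorings line d S v x.1 (x.2 - t₀) (k + 1) := by
  simp only [NonrepetitiveOn, not_forall, not_not] at hT
  obtain ⟨l, i, h, hh, hpts, hrep⟩ := hT
  obtain ⟨t₀, ht₀, hv⟩ : ∃ t₀ < 2 * h, line l (i + t₀) = v := by
    by_contra! hno
    exact hS l i h hh (fun t ht => (mem_insert.1 (hpts t ht)).resolve_left (hno t ht)) hrep
  have hcard : 2 * h ≤ #(insert v S) := by
    rw [← card_block (hinj l) i (2 * h)]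
    refine card_le_card fun p hp => ?_
    obtain ⟨t, ht, rfl⟩ := mem_block.1 hp
    exact hpts t ht
  refine ⟨(l, i + t₀), hX _ _ hv, h - 1, by omega, t₀, by omega, ?_⟩
  rw [Nat.sub_add_cancel hh, add_sub_cancel_right]
  exact ⟨hcd, hS, hpts, hrep⟩

variable [Finite α]

theorem finite_setOf_eq_of_notMem (S : Finset P) : {c : P → α | ∀ p ∉ S, c p = d}.Finite := by
  refine Set.Finite.of_finite_image (f := fun c (p : S) => c p) (Set.toFinite _) ?_
  intro c hc c' hc' hcc'
  funext p
  by_cases hp : p ∈ S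
  · exact congrFun hcc' ⟨p, hp⟩
  · rw [hc p hp, hc' p hp]

theorem goodColorings_finite (S : Finset P) : (goodColorings line d S).Finite :=
  finite_setOf_eq_of_notMem S |>.subset fun _ hc => hc.2

theorem ncard_goodColorings_empty_pos : 0 < (goodColorings line d (∅ : Finset P)).ncard := by
  refine (Set.ncard_pos (goodColorings_finite ∅)).2 ⟨fun _ => d, ?_, fun _ _ => rfl⟩
  intro l i h hh hpts
  exact absurd (hpts 0 (by omega)) (notMem_empty _)

/-- A coloring whose block at `j` is copied at a disjoint block `j'` is determined by its values
off the block `j`. -/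
theorem ncard_le_ncard_goodColorings_sdiff {S : Finset P} {v : P} {l : Λ}
    (hl : Injective (line l)) {j j' : ℤ} {h : ℕ} (hdisj : j' + h ≤ j ∨ j + h ≤ j')
    (hvj : v ∈ block line l j h) (hj' : block line l j' h ⊆ insert v S) {R : Set (P → α)}
    (hR : ∀ c ∈ R, (∀ p ∉ insert v S, c p = d) ∧ NonrepetitiveOn line S c ∧
      ∀ t < h, c (line l (j + t)) = c (line l (j' + t))) :
    R.ncard ≤ (goodColorings line d (S \ (block line l j h).erase v)).ncard := by
  set S' := S \ (block line l j h).erase v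
  let reset (c : P → α) (p : P) : α := if p ∈ S' then c p else d
  refine Set.ncard_le_ncard_of_injOn reset (fun c hc => ⟨?_, fun p hp => if_neg hp⟩) ?_
    (goodColorings_finite _)
  · exact ((hR c hc).2.1.mono sdiff_subset).congr fun p hp => (if_pos hp).symm
  intro c₁ hc₁ c₂ hc₂ hreset
  have hS' (p) (hp : p ∈ S') : c₁ p = c₂ p := by simpa [reset, hp] using congrFun hreset p
  funext p
  by_cases hpS' : p ∈ S'
  · exact hS' p hpS'
  by_cases hpT : p ∉ insert v S
  · rw [(hR c₁ hc₁).1 p hpT, (hR c₂ hc₂).1 p hpT]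
  have hpj : p ∈ block line l j h := by
    by_cases hpv : p = v
    · exact hpv ▸ hvj
    · refine mem_of_mem_erase (not_not.1 fun hpD => hpS' (mem_sdiff.2 ⟨?_, hpD⟩))
      exact (mem_insert.1 (not_not.1 hpT)).resolve_left hpv
  obtain ⟨t, ht, rfl⟩ := mem_block.1 hpj
  have hmirror : line l (j' + t) ∈ S' := by
    have hnot := line_add_notMem_block hl hdisj ht
    have hT := hj' (mem_block.2 ⟨t, ht, rfl⟩)
    refine mem_sdiff.2 ⟨(mem_insert.1 hT).resolve_left ?_, fun hD => hnot (mem_of_mem_erase hD)⟩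
    rintro rfl
    exact hnot hvj
  rw [(hR c₁ hc₁).2.2 t ht, (hR c₂ hc₂).2.2 t ht, hS' _ hmirror]

theorem pow_mul_ncard_squareColorings_le {β : ℕ} {S : Finset P} {v : P}
    (hS : ∀ D ⊆ S, β ^ #D * (goodColorings line d (S \ D)).ncard ≤ (goodColorings line d S).ncard)
    {l : Λ} (hl : Injective (line l)) {i : ℤ} {k t₀ : ℕ} (ht₀ : t₀ < 2 * (k + 1))
    (hv : line l (i + t₀) = v) :
    β ^ k * (squareColorings line d S v l i (k + 1)).ncard ≤ (goodColorings line d S).ncard := by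
  rcases (squareColorings line d S v l i (k + 1)).eq_empty_or_nonempty with hempty | ⟨c₀, hc₀⟩
  · simp [hempty]
  -- `j` is the half of the square containing `v`, `j'` the other half
  obtain ⟨j, j', hdisj, hvj, hcopy, hhalves⟩ : ∃ j j' : ℤ,
      (j' + (k + 1 : ℕ) ≤ j ∨ j + (k + 1 : ℕ) ≤ j') ∧ v ∈ block line l j (k + 1) ∧
      (∀ c ∈ squareColorings line d S v l i (k + 1),
        ∀ t < k + 1, c (line l (j + t)) = c (line l (j' + t))) ∧
      ∀ t < k + 1, line l (j + t) ∈ insert v S ∧ line l (j' + t) ∈ insert v S := by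
    have hpts := hc₀.2.2.1
    have hsnd (t : ℕ) (ht : t < k + 1) : line l (i + (k + 1 : ℕ) + t) ∈ insert v S := by
      simpa [add_assoc] using hpts (k + 1 + t) (by omega)
    by_cases hlow : t₀ < k + 1
    · exact ⟨i, i + (k + 1 : ℕ), Or.inr le_rfl, mem_block.2 ⟨t₀, hlow, hv⟩,
        fun c hc => hc.2.2.2, fun t ht => ⟨hpts t (by omega), hsnd t ht⟩⟩
    · refine ⟨i + (k + 1 : ℕ), i, Or.inl le_rfl, mem_block.2 ⟨t₀ - (k + 1), by omega, ?_⟩,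
        fun c hc t ht => (hc.2.2.2 t ht).symm, fun t ht => ⟨hsnd t ht, hpts t (by omega)⟩⟩
      rw [← hv]
      congr 1
      omega
  set D := (block line l j (k + 1)).erase v
  have hDS : D ⊆ S := by
    intro p hp
    obtain ⟨hpv, hp⟩ := mem_erase.1 hp
    obtain ⟨t, ht, rfl⟩ := mem_block.1 hp
    exact (mem_insert.1 (hhalves t ht).1).resolve_left hpv
  have hD : #D = k := by rw [card_erase_of_mem hvj, card_block hl]; rfl
  calc β ^ k * (squareColorings line d S v l i (k + 1)).ncard
      ≤ β ^ #D * (goodColorings line d (S \ D)).ncard := by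
        rw [hD]
        refine Nat.mul_le_mul_left _ (ncard_le_ncard_goodColorings_sdiff hl hdisj hvj ?_ ?_)
        · intro p hp
          obtain ⟨t, ht, rfl⟩ := mem_block.1 hp
          exact (hhalves t ht).2
        · exact fun c hc => ⟨hc.1, hc.2.1, hcopy c hc⟩
    _ ≤ _ := hS D hDS

/-- Extending a good coloring of `S` to `v` in any of the `Nat.card α` ways yields either a good
coloring of `insert v S` or a repetition through `v`. -/
theorem card_mul_ncard_goodColorings_le (hinj : ∀ l, Injective (line l)) {S : Finset P} {v : P}
    (hv : v ∉ S) {X : Finset (Λ × ℤ)} (hX : ∀ l z, line l z = v → (l, z) ∈ X) :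
    Nat.card α * (goodColorings line d S).ncard ≤ (goodColorings line d (insert v S)).ncard +
      ∑ x ∈ X, ∑ k ∈ range #(insert v S), ∑ t₀ ∈ range (2 * (k + 1)),
        (squareColorings line d S v x.1 (x.2 - t₀) (k + 1)).ncard := by
  set U := ⋃ x ∈ X, ⋃ k ∈ range #(insert v S), ⋃ t₀ ∈ range (2 * (k + 1)),
    squareColorings line d S v x.1 (x.2 - t₀) (k + 1)
  have hfin : (goodColorings line d (insert v S) ∪ U).Finite := by
    refine (finite_setOf_eq_of_notMem (d := d) (insert v S)).subset ?_
    rintro c (hc | hc)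
    · exact hc.2
    · simp only [U, Set.mem_iUnion] at hc
      obtain ⟨_, _, _, _, _, _, hc⟩ := hc
      exact hc.1
  calc Nat.card α * (goodColorings line d S).ncard
      = (Set.univ ×ˢ goodColorings line d S).ncard := by rw [Set.ncard_prod, Set.ncard_univ]
    _ ≤ (goodColorings line d (insert v S) ∪ U).ncard := by
        refine Set.ncard_le_ncard_of_injOn (fun x => update x.2 v x.1) ?_ ?_ hfin
        · rintro ⟨a, c⟩ ⟨-, hc, hcd⟩
          have hcd' : ∀ p ∉ insert v S, update c v a p = d := fun p hp => by
            rw [update_of_ne (ne_of_mem_of_not_mem (mem_insert_self v S) hp).symm]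
            exact hcd p fun hpS => hp (mem_insert_of_mem hpS)
          have hS : NonrepetitiveOn line S (update c v a) :=
            hc.congr fun p hp => (update_of_ne (ne_of_mem_of_not_mem hp hv) a c).symm
          by_cases hT : NonrepetitiveOn line (insert v S) (update c v a)
          · exact Or.inl ⟨hT, hcd'⟩
          · obtain ⟨x, hx, k, hk, t₀, ht₀, hsq⟩ :=
              exists_mem_squareColorings_of_not_nonrepetitiveOn_insert hinj hX hcd' hS hT
            exact Or.inr (Set.mem_biUnion hx (Set.mem_biUnion (mem_range.2 hk)
              (Set.mem_biUnion (mem_range.2 ht₀) hsq)))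
        · rintro ⟨a, c⟩ ⟨-, -, hcd⟩ ⟨a', c'⟩ ⟨-, -, hcd'⟩ heq
          have ha : a = a' := by simpa using congrFun heq v
          refine Prod.ext ha (funext fun p => ?_)
          by_cases hp : p = v
          · rw [hp, hcd v hv, hcd' v hv]
          · simpa [hp] using congrFun heq p
    _ ≤ (goodColorings line d (insert v S)).ncard + U.ncard := Set.ncard_union_le _ _
    _ ≤ _ := by
        refine Nat.add_le_add_left ((X.set_ncard_biUnion_le _).trans (sum_le_sum fun x _ => ?_)) _
        refine ((range _).set_ncard_biUnion_le _).trans (sum_le_sum fun k _ => ?_)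
        exact (range _).set_ncard_biUnion_le _

theorem mul_ncard_goodColorings_le_insert (hinj : ∀ l, Injective (line l)) {β I : ℕ}
    (hβ : 2 ≤ β) (hC : (β : ℝ) + 2 * I * (β / (β - 1)) ^ 2 ≤ Nat.card α) {S : Finset P} {v : P}
    (hv : v ∉ S) {X : Finset (Λ × ℤ)} (hX : ∀ x, x ∈ X ↔ line x.1 x.2 = v) (hXI : #X ≤ I)
    (hS : ∀ D ⊆ S, β ^ #D * (goodColorings line d (S \ D)).ncard ≤ (goodColorings line d S).ncard) :
    β * (goodColorings line d S).ncard ≤ (goodColorings line d (insert v S)).ncard := by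
  set A := (goodColorings line d S).ncard
  set sq := fun (x : Λ × ℤ) (k : ℕ) => ∑ t₀ ∈ range (2 * (k + 1)),
    ((squareColorings line d S v x.1 (x.2 - t₀) (k + 1)).ncard : ℝ)
  have hsq (x : Λ × ℤ) (hx : x ∈ X) (k : ℕ) : (β : ℝ) ^ k * sq x k ≤ (k + 1) * (2 * A) := by
    rw [mul_sum]
    calc ∑ t₀ ∈ range (2 * (k + 1)), (β : ℝ) ^ k *
          ((squareColorings line d S v x.1 (x.2 - t₀) (k + 1)).ncard : ℝ)
        ≤ ∑ t₀ ∈ range (2 * (k + 1)), (A : ℝ) := sum_le_sum fun t₀ ht₀ => by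
          refine mod_cast pow_mul_ncard_squareColorings_le hS (hinj x.1) (mem_range.1 ht₀) ?_
          rw [sub_add_cancel]
          exact (hX x).1 hx
      _ = (k + 1) * (2 * A) := by
          rw [sum_const, card_range, nsmul_eq_mul]
          push_cast
          ring
  have hbad : ∑ x ∈ X, ∑ k ∈ range #(insert v S), sq x k ≤ I * ((β / (β - 1)) ^ 2 * (2 * A)) :=
    calc ∑ x ∈ X, ∑ k ∈ range #(insert v S), sq x k
        ≤ ∑ x ∈ X, (β / (β - 1) : ℝ) ^ 2 * (2 * A) := sum_le_sum fun x hx =>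
          sum_range_le_of_pow_mul_le (by exact_mod_cast hβ) (by positivity) (hsq x hx) _
      _ = #X * ((β / (β - 1)) ^ 2 * (2 * A)) := by rw [sum_const, nsmul_eq_mul]
      _ ≤ I * ((β / (β - 1)) ^ 2 * (2 * A)) := by gcongr
  have hcount : (Nat.card α * A : ℝ) ≤ (goodColorings line d (insert v S)).ncard +
      ∑ x ∈ X, ∑ k ∈ range #(insert v S), sq x k := by
    simp only [sq]
    exact_mod_cast card_mul_ncard_goodColorings_le (d := d) hinj hv fun l z => (hX (l, z)).2
  have hA : (0 : ℝ) ≤ A := by positivity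
  have hβA : (β * A : ℝ) ≤ (goodColorings line d (insert v S)).ncard := by
    nlinarith [mul_le_mul_of_nonneg_right hC hA]
  exact_mod_cast hβA

end Counting

theorem nonrepetitive_coloring_of_configuration_general
    {P : Type*} {Λ : Type*} (line : Λ → ℤ → P)
    (hinj : ∀ l, Function.Injective (line l))
    (I : ℕ) (hI : 2 < I)
    (hinc : ∀ p : P, (Set.Finite {l : Λ | ∃ z : ℤ, line l z = p}) ∧
      Nat.card {l : Λ | ∃ z : ℤ, line l z = p} ≤ I)
    (C : ℕ) (hC : 2 * I + 10 * ⌈Real.sqrt I⌉₊ ≤ C) :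
    ∃ c : P → Fin C, ∀ l : Λ, ∀ (i : ℤ) (h : ℕ), 1 ≤ h →
      ¬ ∀ t : ℕ, t < h → c (line l (i + t)) = c (line l (i + h + t)) := by
  classical
  set s := ⌈Real.sqrt I⌉₊
  have hs : 1 ≤ s := Nat.ceil_pos.2 (Real.sqrt_pos.2 (by exact_mod_cast (by omega : 0 < I)))
  have hIs : (I : ℝ) ≤ (s : ℝ) ^ 2 := by
    rw [← Real.sq_sqrt (Nat.cast_nonneg I)]
    exact pow_le_pow_left₀ (Real.sqrt_nonneg _) (Nat.le_ceil _) 2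
  have hβC : ((s + 1 : ℕ) : ℝ) + 2 * I * ((s + 1 : ℕ) / ((s + 1 : ℕ) - 1 : ℝ)) ^ 2 ≤
      Nat.card (Fin C) := by
    rw [Nat.card_fin, Nat.cast_add_one, add_sub_cancel_right]
    exact (add_add_two_mul_div_sq_le (by exact_mod_cast hs) hIs).trans (by exact_mod_cast hC)
  let d : Fin C := ⟨0, by omega⟩
  have hpeel := pow_card_mul_le_of_forall_insert (A := fun S => (goodColorings line d S).ncard)
    fun S v hv hS => by
      obtain ⟨X, hX, hXI⟩ := exists_finset_incidences hinj (hinc v).1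
      exact mul_ncard_goodColorings_le_insert hinj (by omega) hβC hv hX (hXI.trans (hinc v).2) hS
  refine exists_nonrepetitive_of_forall_finset fun S => ?_
  have hpos : 0 < (goodColorings line d S).ncard := by
    have hS := hpeel S S subset_rfl
    rw [sdiff_self] at hS
    exact (Nat.mul_pos (by positivity) ncard_goodColorings_empty_pos).trans_le hS
  obtain ⟨c, hc, -⟩ := (Set.ncard_pos (goodColorings_finite S)).1 hpos
  exact ⟨c, hc⟩

/-- Theorem 3: let `P` be a countable set of points and let the lines be an
abstract family of injective maps `ℤ → P` (listing the consecutive points of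
the discrete point set on each line). If every point lies on at most `I` lines
with `I > 2` finite, and `C ≥ 2I + 10⌈√I⌉`, then there is a `C`-coloring of
the points such that the sequence of colors along every line is
nonrepetitive. -/
theorem nonrepetitive_coloring_of_configuration
    {P : Type*} [Countable P] {Λ : Type*} (line : Λ → ℤ → P)
    (hinj : ∀ l, Function.Injective (line l))
    (I : ℕ) (hI : 2 < I)
    (hinc : ∀ p : P, (Set.Finite {l : Λ | ∃ z : ℤ, line l z = p}) ∧
      Nat.card {l : Λ | ∃ z : ℤ, line l z = p} ≤ I)
    (C : ℕ) (hC : 2 * I + 10 * ⌈Real.sqrt I⌉₊ ≤ C) :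
    ∃ c : P → Fin C, ∀ l : Λ, ∀ (i : ℤ) (h : ℕ), 1 ≤ h →
      ¬ ∀ t : ℕ, t < h → c (line l (i + t)) = c (line l (i + h + t)) :=
  nonrepetitive_coloring_of_configuration_general line hinj I hI hinc C hC
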